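/- arXiv:1703.02775 — 4 statements merged into one kernel-verified Lean document; each statement's English description precedes it below -/
import Mathlib

section
/- Let E ⊂ ℝ^n be measurable and θ > 0, and suppose that for every dyadic cube C at scale d intersecting E, the concentric tripled cube 3C satisfies ℒ^n(3C ∩ E) > θ · ℒ^n(3C). If E has finite measure, then ℒ^n(C_d^E) ≤ (1/θ) · ℒ^n(E). -/
open MeasureTheory Metric Set

noncomputable def dyadicCube (n d : ℕ) (m : Fin n → ℤ) : Set (EuclideanSpace ℝ (Fin n)) :=
  {x | ∀ j, (m j : ℝ) * (2 : ℝ) ^ (-(d : ℤ)) ≤ x j ∧ x j ≤ ((m j : ℝ) + 1) * (2 : ℝ) ^ (-(d : ℤ))}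

noncomputable def cubicalCover (n d : ℕ) (E : Set (EuclideanSpace ℝ (Fin n))) :
    Set (EuclideanSpace ℝ (Fin n)) :=
  ⋃ m ∈ {m : Fin n → ℤ | (dyadicCube n d m ∩ E).Nonempty}, dyadicCube n d m

noncomputable def tripledCube (n d : ℕ) (m : Fin n → ℤ) : Set (EuclideanSpace ℝ (Fin n)) :=
  {x | ∀ j, ((m j : ℝ) - 1) * (2 : ℝ) ^ (-(d : ℤ)) ≤ x j ∧ x j ≤ ((m j : ℝ) + 2) * (2 : ℝ) ^ (-(d : ℤ))}

/-! Each dyadic cube `C` meeting `E` satisfies `θ · 3ⁿ · |C| = θ · |3C| < |3C ∩ E|`. Tripled cubes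
whose integer indices agree modulo 3 overlap only in null sets, so for each of the `3ⁿ` residue
classes the sets `3C ∩ E` pack into `E`; summing gives `θ · 3ⁿ · |C_d^E| ≤ 3ⁿ · |E|`. -/

theorem EuclideanSpace.volume_setOf_forall_mem {ι : Type*} [Fintype ι] (s : ι → Set ℝ) :
    volume {x : EuclideanSpace ℝ ι | ∀ i, x i ∈ s i} = ∏ i, volume (s i) := by
  rw [← volume_pi_pi,
    ← (EuclideanSpace.volume_preserving_symm_measurableEquiv_toLp ι).measure_preimage_equiv]
  congr 1
  ext x
  simp [MeasurableEquiv.toLp_symm_apply]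

theorem tsum_measure_inter_le_of_pairwise_aedisjoint {α ι : Type*} [MeasurableSpace α]
    [Countable ι] {μ : Measure α} {A : ι → Set α} (hA : ∀ i, MeasurableSet (A i))
    (hd : Pairwise (Function.onFun (AEDisjoint μ) A)) (E : Set α) : ∑' i, μ (A i ∩ E) ≤ μ E := by
  have hdE : Pairwise (Function.onFun (AEDisjoint (μ.restrict E)) A) := fun i j hij =>
    nonpos_iff_eq_zero.1 ((Measure.restrict_apply_le _ _).trans_eq (hd hij))
  calc ∑' i, μ (A i ∩ E) = ∑' i, μ.restrict E (A i) := by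
        simp only [Measure.restrict_apply (hA _)]
    _ = μ.restrict E (⋃ i, A i) :=
        (measure_iUnion₀ hdE fun i => (hA i).nullMeasurableSet).symm
    _ ≤ μ.restrict E univ := measure_mono (subset_univ _)
    _ = μ E := Measure.restrict_apply_univ E

lemma dyadicCube_eq (n d : ℕ) (m : Fin n → ℤ) : dyadicCube n d m =
    {x | ∀ j, x j ∈ Icc ((m j : ℝ) * 2 ^ (-(d : ℤ))) ((m j + 1) * 2 ^ (-(d : ℤ)))} := rfl

lemma tripledCube_eq (n d : ℕ) (m : Fin n → ℤ) : tripledCube n d m =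
    {x | ∀ j, x j ∈ Icc (((m j : ℝ) - 1) * 2 ^ (-(d : ℤ))) ((m j + 2) * 2 ^ (-(d : ℤ)))} := rfl

lemma volume_tripledCube (n d : ℕ) (m : Fin n → ℤ) :
    volume (tripledCube n d m) = 3 ^ n * volume (dyadicCube n d m) := by
  simp only [tripledCube_eq, dyadicCube_eq, EuclideanSpace.volume_setOf_forall_mem,
    Real.volume_Icc, ← sub_mul]
  norm_num [ENNReal.ofReal_mul, mul_pow]

lemma measurableSet_tripledCube (n d : ℕ) (m : Fin n → ℤ) :
    MeasurableSet (tripledCube n d m) := by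
  rw [tripledCube_eq, ofPred_forall]
  exact MeasurableSet.iInter fun j => measurableSet_Icc.preimage (by fun_prop)

lemma volume_tripledCube_inter_tripledCube_of_add_three_le (n d : ℕ) {m m' : Fin n → ℤ}
    (j : Fin n) (h : m j + 3 ≤ m' j) :
    volume (tripledCube n d m ∩ tripledCube n d m') = 0 := by
  simp only [tripledCube_eq, ← ofPred_and, ← forall_and, ← mem_inter_iff,
    EuclideanSpace.volume_setOf_forall_mem]
  refine Finset.prod_eq_zero (Finset.mem_univ j) (measure_mono_null ?_ (measure_singleton
    (((m j : ℝ) + 2) * 2 ^ (-(d : ℤ)))))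
  rintro x ⟨⟨-, hx⟩, ⟨hx', -⟩⟩
  have : (m j : ℝ) + 3 ≤ m' j := by exact_mod_cast h
  have : (0 : ℝ) < 2 ^ (-(d : ℤ)) := by positivity
  exact le_antisymm hx (by nlinarith)

lemma aedisjoint_tripledCube_of_intCast_eq (n d : ℕ) {m m' : Fin n → ℤ} (hne : m ≠ m')
    (h : ∀ j, (m j : ZMod 3) = m' j) :
    AEDisjoint volume (tripledCube n d m) (tripledCube n d m') := by
  obtain ⟨j, hj⟩ := Function.ne_iff.1 hne
  have h3 : (3 : ℤ) ∣ m' j - m j := (ZMod.intCast_eq_intCast_iff_dvd_sub _ _ 3).1 (h j)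
  rcases (by omega : m j + 3 ≤ m' j ∨ m' j + 3 ≤ m j) with hlt | hgt
  · exact volume_tripledCube_inter_tripledCube_of_add_three_le n d j hlt
  · exact AEDisjoint.symm (volume_tripledCube_inter_tripledCube_of_add_three_le n d j hgt)

lemma tsum_volume_tripledCube_inter_le (n d : ℕ) (E : Set (EuclideanSpace ℝ (Fin n))) :
    ∑' m, volume (tripledCube n d m ∩ E) ≤ 3 ^ n * volume E := by
  let residue : (Fin n → ℤ) → Fin n → ZMod 3 := fun m j => m j
  have fiber (r : Fin n → ZMod 3) :
      ∑' m : {m // residue m = r}, volume (tripledCube n d m ∩ E) ≤ volume E :=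
    tsum_measure_inter_le_of_pairwise_aedisjoint
      (A := fun m : {m // residue m = r} => tripledCube n d m)
      (fun m => measurableSet_tripledCube n d m)
      (fun a b hab => aedisjoint_tripledCube_of_intCast_eq n d (Subtype.coe_injective.ne hab)
        (congrFun (a.2.trans b.2.symm))) E
  calc ∑' m, volume (tripledCube n d m ∩ E)
      = ∑' r, ∑' m : {m // residue m = r}, volume (tripledCube n d m ∩ E) := by
        rw [← (Equiv.sigmaFiberEquiv residue).tsum_eq, ENNReal.tsum_sigma']
        rfl
    _ ≤ ∑' _ : Fin n → ZMod 3, volume E := ENNReal.tsum_le_tsum fiber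
    _ = 3 ^ n * volume E := by simp [tsum_fintype]

theorem stmt_4_general (n d : ℕ) (E : Set (EuclideanSpace ℝ (Fin n))) (θ : ℝ) (hθ : 0 < θ)
    (h : ∀ m : Fin n → ℤ, (dyadicCube n d m ∩ E).Nonempty →
      ENNReal.ofReal θ * volume (tripledCube n d m) < volume (tripledCube n d m ∩ E)) :
    volume (cubicalCover n d E) ≤ ENNReal.ofReal (1 / θ) * volume E := by
  set S := {m | (dyadicCube n d m ∩ E).Nonempty}
  have key : 3 ^ n * (ENNReal.ofReal θ * volume (cubicalCover n d E)) ≤ 3 ^ n * volume E := calc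
    _ ≤ 3 ^ n * (ENNReal.ofReal θ * ∑' m : S, volume (dyadicCube n d m)) := by
        gcongr
        exact measure_biUnion_le volume S.to_countable _
    _ = ∑' m : S, ENNReal.ofReal θ * volume (tripledCube n d m) := by
        simp only [volume_tripledCube, ← ENNReal.tsum_mul_left]
        ring_nf
    _ ≤ ∑' m : S, volume (tripledCube n d m ∩ E) := ENNReal.tsum_le_tsum fun m => (h m m.2).le
    _ ≤ ∑' m, volume (tripledCube n d m ∩ E) :=
        ENNReal.tsum_comp_le_tsum_of_injective Subtype.val_injective _
    _ ≤ 3 ^ n * volume E := tsum_volume_tripledCube_inter_le n d E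
  rw [one_div, ENNReal.ofReal_inv_of_pos hθ, ← ENNReal.div_eq_inv_mul,
    ENNReal.le_div_iff_mul_le (Or.inl (by positivity)) (Or.inl ENNReal.ofReal_ne_top), mul_comm]
  exact (ENNReal.mul_le_mul_iff_right (by positivity) (by simp)).1 key

theorem stmt_4 (n d : ℕ) (E : Set (EuclideanSpace ℝ (Fin n)))
    (hE : MeasurableSet E) (hfin : volume E < ⊤) (θ : ℝ) (hθ : 0 < θ)
    (h : ∀ m : Fin n → ℤ, (dyadicCube n d m ∩ E).Nonempty →
      ENNReal.ofReal θ * volume (tripledCube n d m) < volume (tripledCube n d m ∩ E)) :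
    volume (cubicalCover n d E) ≤ ENNReal.ofReal (1 / θ) * volume E :=
  stmt_4_general n d E θ hθ h
end

section
/- Let F ⊂ ℝ^n be bounded with finite positive measure and suppose F is lower regular: there exist m > 0 and r_0 > 0 with ℒ^n(F ∩ B̄(x,r)) ≥ m r^n for all x ∈ F and 0 < r < r_0. Then there exist θ = θ(m,n) > 0 and d_0 (depending only on r_0 and n) such that for all d ≥ d_0, ℒ^n(C_d^F) ≤ (1/θ) ℒ^n(F). -/
open MeasureTheory Metric Set

/-!
A dyadic cube `Q` of side `s` meeting `F` at `x` has `|Q| = sⁿ = 2ⁿ (s/2)ⁿ ≤ (2ⁿ/m) |F ∩ B̄(x, s/2)|`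
as soon as `s/2 < r₀`, and `B̄(x, s/2)` lies in the union of the `3ⁿ` half-open cubes neighbouring
`Q`. Summing over the cubes meeting `F`, each half-open cube is counted at most `3ⁿ` times, so
`|C_d^F| ≤ (6ⁿ/m) |F|`, i.e. one can take `θ = m / 6ⁿ`.
-/

open Function

/-- Unlike the closed cubes `dyadicCube n d k`, which overlap along faces, these tile the space. -/
def dyadicCubeIco (n d : ℕ) (k : Fin n → ℤ) : Set (EuclideanSpace ℝ (Fin n)) :=
  {x | ∀ j, (k j : ℝ) * (2 : ℝ) ^ (-(d : ℤ)) ≤ x j ∧ x j < ((k j : ℝ) + 1) * (2 : ℝ) ^ (-(d : ℤ))}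

section
variable {n d : ℕ}

lemma mem_dyadicCubeIco_iff {k : Fin n → ℤ} {x : EuclideanSpace ℝ (Fin n)} :
    x ∈ dyadicCubeIco n d k ↔ (fun j => ⌊x j / (2 : ℝ) ^ (-(d : ℤ))⌋) = k := by
  have hs : (0 : ℝ) < (2 : ℝ) ^ (-(d : ℤ)) := by positivity
  simp only [dyadicCubeIco, mem_ofPred_eq, funext_iff, Int.floor_eq_iff, le_div_iff₀ hs,
    div_lt_iff₀ hs]

lemma pairwise_disjoint_dyadicCubeIco : Pairwise (Disjoint on dyadicCubeIco n d) :=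
  fun _ _ hkk' => disjoint_left.2 fun _ hx hx' =>
    hkk' ((mem_dyadicCubeIco_iff.1 hx).symm.trans (mem_dyadicCubeIco_iff.1 hx'))

lemma iUnion_dyadicCubeIco : ⋃ k, dyadicCubeIco n d k = univ :=
  eq_univ_of_forall fun _ => mem_iUnion.2 ⟨_, mem_dyadicCubeIco_iff.2 rfl⟩

lemma measurableSet_dyadicCubeIco (k : Fin n → ℤ) : MeasurableSet (dyadicCubeIco n d k) := by
  simp only [dyadicCubeIco, ofPred_forall]
  measurability

lemma tsum_measure_inter_dyadicCubeIco (μ : Measure (EuclideanSpace ℝ (Fin n)))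
    (F : Set (EuclideanSpace ℝ (Fin n))) :
    ∑' k, μ (F ∩ dyadicCubeIco n d k) = μ F := by
  simp_rw [inter_comm F, ← Measure.restrict_apply (measurableSet_dyadicCubeIco _),
    ← measure_iUnion pairwise_disjoint_dyadicCubeIco measurableSet_dyadicCubeIco,
    iUnion_dyadicCubeIco, Measure.restrict_apply_univ]

lemma volume_dyadicCube (k : Fin n → ℤ) :
    volume (dyadicCube n d k) = ENNReal.ofReal ((2 : ℝ) ^ (-(d : ℤ))) ^ n := by
  have : dyadicCube n d k = WithLp.ofLp ⁻¹' Icc (fun j => (k j : ℝ) * (2 : ℝ) ^ (-(d : ℤ)))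
      (fun j => ((k j : ℝ) + 1) * (2 : ℝ) ^ (-(d : ℤ))) := by
    ext x
    simp [dyadicCube, Pi.le_def, forall_and]
  rw [this, (PiLp.volume_preserving_ofLp (Fin n)).measure_preimage
    measurableSet_Icc.nullMeasurableSet, Real.volume_Icc_pi]
  simp_rw [add_one_mul, add_sub_cancel_left, Finset.prod_const, Finset.card_univ,
    Fintype.card_fin]

noncomputable def neighborOffsets (n : ℕ) : Finset (Fin n → ℤ) :=
  Fintype.piFinset fun _ => Finset.Icc (-1) 1

lemma card_neighborOffsets : (neighborOffsets n).card = 3 ^ n := by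
  simp [neighborOffsets, Fintype.card_piFinset]

lemma tsum_sum_measure_inter_dyadicCubeIco_add_le (μ : Measure (EuclideanSpace ℝ (Fin n)))
    (F : Set (EuclideanSpace ℝ (Fin n))) (S : Set (Fin n → ℤ)) :
    ∑' k : S, ∑ ε ∈ neighborOffsets n, μ (F ∩ dyadicCubeIco n d (k + ε)) ≤ 3 ^ n * μ F := by
  rw [Summable.tsum_finsetSum fun _ _ => ENNReal.summable]
  calc ∑ ε ∈ neighborOffsets n, ∑' k : S, μ (F ∩ dyadicCubeIco n d (k + ε))
      ≤ ∑ _ε ∈ neighborOffsets n, μ F := by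
        refine Finset.sum_le_sum fun ε _ => ?_
        rw [← tsum_measure_inter_dyadicCubeIco μ F (d := d)]
        exact ENNReal.tsum_comp_le_tsum_of_injective
          ((add_left_injective ε).comp Subtype.val_injective) _
    _ = 3 ^ n * μ F := by rw [Finset.sum_const, card_neighborOffsets, nsmul_eq_mul, Nat.cast_pow, Nat.cast_ofNat]

lemma closedBall_subset_biUnion_dyadicCubeIco {k : Fin n → ℤ} {x : EuclideanSpace ℝ (Fin n)}
    (hx : x ∈ dyadicCube n d k) :
    closedBall x ((2 : ℝ) ^ (-(d : ℤ)) / 2) ⊆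
      ⋃ ε ∈ neighborOffsets n, dyadicCubeIco n d (k + ε) := by
  set s : ℝ := (2 : ℝ) ^ (-(d : ℤ))
  have hs : 0 < s := by positivity
  intro y hy
  set κ : Fin n → ℤ := fun j => ⌊y j / s⌋
  have hyκ : y ∈ dyadicCubeIco n d κ := mem_dyadicCubeIco_iff.2 rfl
  refine mem_biUnion (x := κ - k) (Fintype.mem_piFinset.2 fun j => ?_) (by simpa using hyκ)
  have hyx : |y j - x j| ≤ s / 2 :=
    (PiLp.dist_apply_le y x j).trans (mem_closedBall.1 hy)
  obtain ⟨hxl, hxu⟩ := hx j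
  obtain ⟨hyl, hyu⟩ := abs_le.1 hyx
  have hlow : k j - 1 ≤ κ j := Int.le_floor.2 <| by
    push_cast; rw [le_div_iff₀ hs]; linarith
  have hupp : κ j < k j + 2 := Int.floor_lt.2 <| by
    push_cast; rw [div_lt_iff₀ hs]; linarith
  rw [Pi.sub_apply, Finset.mem_Icc]
  omega

lemma volume_dyadicCube_le_sum_neighbors {m : ℝ} (hm : 0 < m) {k : Fin n → ℤ}
    {F : Set (EuclideanSpace ℝ (Fin n))} {x : EuclideanSpace ℝ (Fin n)}
    (hx : x ∈ dyadicCube n d k)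
    (hreg : ENNReal.ofReal (m * ((2 : ℝ) ^ (-(d : ℤ)) / 2) ^ n) ≤
      volume (F ∩ closedBall x ((2 : ℝ) ^ (-(d : ℤ)) / 2))) :
    volume (dyadicCube n d k) ≤
      ENNReal.ofReal (2 ^ n / m) *
        ∑ ε ∈ neighborOffsets n, volume (F ∩ dyadicCubeIco n d (k + ε)) := by
  set s : ℝ := (2 : ℝ) ^ (-(d : ℤ))
  have hs : 0 < s := by positivity
  calc volume (dyadicCube n d k)
      = ENNReal.ofReal (2 ^ n / m) * ENNReal.ofReal (m * (s / 2) ^ n) := by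
        rw [volume_dyadicCube, ← ENNReal.ofReal_pow hs.le, ← ENNReal.ofReal_mul (by positivity)]
        congr 1
        rw [div_mul_eq_mul_div, mul_left_comm, ← mul_pow, mul_div_cancel₀ _ two_ne_zero,
          mul_div_cancel_left₀ _ hm.ne']
    _ ≤ ENNReal.ofReal (2 ^ n / m) *
          volume (F ∩ ⋃ ε ∈ neighborOffsets n, dyadicCubeIco n d (k + ε)) := by
        gcongr
        exact hreg.trans (measure_mono (inter_subset_inter_right F
          (closedBall_subset_biUnion_dyadicCubeIco hx)))
    _ ≤ _ := by
        rw [inter_iUnion₂]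
        gcongr
        exact measure_biUnion_finset_le _ _

theorem volume_cubicalCover_le {m : ℝ} (hm : 0 < m) {F : Set (EuclideanSpace ℝ (Fin n))}
    (hreg : ∀ x ∈ F, ENNReal.ofReal (m * ((2 : ℝ) ^ (-(d : ℤ)) / 2) ^ n) ≤
      volume (F ∩ closedBall x ((2 : ℝ) ^ (-(d : ℤ)) / 2))) :
    volume (cubicalCover n d F) ≤ ENNReal.ofReal (6 ^ n / m) * volume F := by
  set S := {k : Fin n → ℤ | (dyadicCube n d k ∩ F).Nonempty}
  set c := ENNReal.ofReal (2 ^ n / m)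
  have hcube : ∀ k : S, volume (dyadicCube n d k) ≤
      c * ∑ ε ∈ neighborOffsets n, volume (F ∩ dyadicCubeIco n d (k + ε)) := by
    rintro ⟨k, x, hxk, hxF⟩
    exact volume_dyadicCube_le_sum_neighbors hm hxk (hreg x hxF)
  calc volume (cubicalCover n d F)
      ≤ ∑' k : S, volume (dyadicCube n d k) := measure_biUnion_le _ S.to_countable _
    _ ≤ ∑' k : S, c * ∑ ε ∈ neighborOffsets n, volume (F ∩ dyadicCubeIco n d (k + ε)) :=
        ENNReal.tsum_le_tsum hcube
    _ = c * ∑' k : S, ∑ ε ∈ neighborOffsets n, volume (F ∩ dyadicCubeIco n d (k + ε)) :=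
        ENNReal.tsum_mul_left
    _ ≤ c * (3 ^ n * volume F) := by
        gcongr
        exact tsum_sum_measure_inter_dyadicCubeIco_add_le volume F S
    _ = ENNReal.ofReal (6 ^ n / m) * volume F := by
        have h6 : (6 : ℝ) ^ n / m = 2 ^ n / m * 3 ^ n := by
          rw [div_mul_eq_mul_div, ← mul_pow]
          norm_num
        rw [← mul_assoc, h6, ENNReal.ofReal_mul (by positivity),
          ENNReal.ofReal_pow zero_le_three, ENNReal.ofReal_ofNat]

end

theorem stmt_6 (n : ℕ) (m r₀ : ℝ) (hm : 0 < m) (hr₀ : 0 < r₀) :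
    ∃ θ : ℝ, 0 < θ ∧ ∃ d₀ : ℕ,
      ∀ (F : Set (EuclideanSpace ℝ (Fin n))), Bornology.IsBounded F →
        0 < volume F → volume F < ⊤ →
        (∀ x ∈ F, ∀ r : ℝ, 0 < r → r < r₀ →
          ENNReal.ofReal (m * r ^ n) ≤ volume (F ∩ Metric.closedBall x r)) →
        ∀ d : ℕ, d₀ ≤ d →
          volume (cubicalCover n d F) ≤ ENNReal.ofReal (1 / θ) * volume F := by
  obtain ⟨d₀, hd₀⟩ := exists_pow_lt_of_lt_one hr₀ (by norm_num : (2⁻¹ : ℝ) < 1)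
  refine ⟨m / 6 ^ n, by positivity, d₀, fun F _ _ _ hreg d hd => ?_⟩
  have hradius : (2 : ℝ) ^ (-(d : ℤ)) / 2 < r₀ :=
    calc (2 : ℝ) ^ (-(d : ℤ)) / 2 < (2 : ℝ) ^ (-(d : ℤ)) := half_lt_self (by positivity)
      _ ≤ 2⁻¹ ^ d₀ := by
        rw [zpow_neg, zpow_natCast, inv_pow]
        gcongr
        exact one_le_two
      _ < r₀ := hd₀
  rw [one_div_div]
  exact volume_cubicalCover_le hm fun x hx => hreg x hx _ (by positivity) hradius
end

section
/- Let E ⊂ ℝ^n be a closed set with reach(E) ≥ R > 0. Then for every 0 < r < R and every x with dist(x,E) ≤ r, there is a unique closest point π(x) ∈ E, and the nearest-point projection π is Lipschitz on E_r = {x : dist(x,E) ≤ r} with Lipschitz constant R/(R − r). -/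
/-!
Let `x` lie at distance `δ < R` from `E`, with nearest point `a`. Since nearest points depend
continuously on the base point, pushing a point `γ` away from its nearest point increases
`infDist γ E` at a rate arbitrarily close to `1`; a maximality argument on a compact set then
gives, for every `s < R`, a point `γ` with `s ≤ infDist γ E` and `dist γ x ≤ s - δ`. Such a `γ`
must be `a + (s / δ) • (x - a)`, so the open ball of radius `s` around it misses `E`, which is
Federer's inequality `2 R ⟪x - a, b - a⟫ ≤ δ ‖b - a‖²` for `b ∈ E` (in the limit `s → R`).
Adding it at `x` and at `y` gives `(R - r) ‖π x - π y‖² ≤ R ⟪x - y, π x - π y⟫`.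
-/

open Metric Set Filter Topology
open scoped RealInnerProductSpace

theorem mul_le_of_forall_mem_Ioo_mul_le {a b c d : ℝ} (hab : a < b)
    (h : ∀ t ∈ Ioo a b, t * c ≤ d) : b * c ≤ d :=
  le_of_tendsto ((tendsto_id.mono_left nhdsWithin_le_nhds).mul_const c)
    (eventually_of_mem (Ioo_mem_nhdsLT hab) h)

section Metric

variable {X : Type*} [PseudoMetricSpace X] [ProperSpace X]

theorem eventually_nhds_forall_nearest_dist_lt {E : Set X} (hE : IsClosed E) {γ a : X}
    (huniq : ∀ q ∈ E, dist γ q = infDist γ E → q = a) {θ : ℝ} (hθ : 0 < θ) :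
    ∀ᶠ y in 𝓝 γ, ∀ q ∈ E, dist y q = infDist y E → dist q a < θ := by
  set K := (E ∩ closedBall γ (infDist γ E + 1)) \ ball a θ
  have hK : IsCompact K := ((isCompact_closedBall _ _).inter_left hE).diff isOpen_ball
  -- on the compact set `K` of far candidates, `dist γ ·` stays uniformly above `infDist γ E`
  obtain ⟨m, hm, hmK⟩ : ∃ m, infDist γ E < m ∧ ∀ q ∈ K, m ≤ dist γ q := by
    refine hK.exists_forall_le' (continuous_const.dist continuous_id).continuousOn ?_
    rintro q ⟨⟨hqE, -⟩, hqa⟩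
    refine (infDist_le_dist_of_mem hqE).lt_of_ne fun h => hqa ?_
    rw [huniq q hqE h.symm]; exact mem_ball_self hθ
  refine Metric.eventually_nhds_iff.2 ⟨min ((m - infDist γ E) / 2) (1 / 2), by positivity, ?_⟩
  intro y hy q hqE hq
  have hy₁ := hy.trans_le (min_le_left _ _)
  have hy₂ := hy.trans_le (min_le_right _ _)
  have hγq : dist γ q ≤ infDist γ E + 2 * dist y γ := by
    have := @infDist_le_infDist_add_dist _ _ E y γ
    linarith [dist_triangle γ y q, dist_comm γ y]
  by_contra! hqa
  have := hmK q ⟨⟨hqE, mem_closedBall'.2 (by linarith)⟩, fun h => (mem_ball.1 h).not_ge hqa⟩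
  linarith

theorem exists_le_and_mul_dist_le {f : X → ℝ} (hf : Continuous f) {x₀ : X} {ρ s : ℝ}
    (hρ : 0 < ρ) (hs : f x₀ ≤ s)
    (hgrow : ∀ γ, f x₀ ≤ f γ → f γ < s →
      ∀ᶠ ε in 𝓝[>] 0, ∃ γ', dist γ' γ = ε ∧ f γ + ρ * ε ≤ f γ') :
    ∃ γ, s ≤ f γ ∧ ρ * dist γ x₀ ≤ s - f x₀ := by
  set S := {γ | ρ * dist γ x₀ ≤ min (f γ) s - f x₀}
  have hS : IsCompact S := by
    refine isCompact_of_isClosed_isBounded (isClosed_le (by fun_prop) (by fun_prop))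
      (isBounded_closedBall (x := x₀) (r := (s - f x₀) / ρ) |>.subset fun γ hγ => ?_)
    rw [mem_closedBall, le_div_iff₀' hρ]
    exact hγ.trans (by linarith [min_le_right (f γ) s])
  -- a maximiser of `min f s` on `S` must reach level `s`, otherwise `hgrow` improves it
  obtain ⟨γ, hγS, hmax⟩ := hS.exists_isMaxOn ⟨x₀, by simp [S, hs]⟩
    (f := fun γ => min (f γ) s) (by fun_prop)
  by_cases hγs : s ≤ f γ
  · exact ⟨γ, hγs, by simpa [S, min_eq_right hγs] using hγS⟩
  rw [not_le] at hγs
  have hγS' : ρ * dist γ x₀ ≤ f γ - f x₀ := by simpa [S, min_eq_left hγs.le] using hγS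
  have hγ₀ : f x₀ ≤ f γ := by linarith [mul_nonneg hρ.le (dist_nonneg (x := γ) (y := x₀))]
  obtain ⟨ε, ⟨γ', hγ'γ, hγ'⟩, hε0, hεs⟩ :=
    ((hgrow γ hγ₀ hγs).and (Ioo_mem_nhdsGT (div_pos (sub_pos.2 hγs) hρ))).exists
  rw [lt_div_iff₀' hρ] at hεs
  have hγ'S : γ' ∈ S :=
    calc ρ * dist γ' x₀ ≤ ρ * (ε + dist γ x₀) := by
          gcongr; rw [← hγ'γ]; exact dist_triangle _ _ _
      _ ≤ min (f γ + ρ * ε) s - f x₀ := by rw [min_eq_left (by linarith)]; linarith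
      _ ≤ min (f γ') s - f x₀ := by gcongr
  have hlt : min (f γ) s < min (f γ') s := by
    rw [min_eq_left hγs.le]
    exact lt_min (by linarith [mul_pos hρ hε0]) hγs
  exact ((isMaxOn_iff.1 hmax γ' hγ'S).not_gt hlt).elim

theorem exists_le_and_dist_le {f : X → ℝ} (hf : Continuous f) {x₀ : X} {s : ℝ} (hs : f x₀ ≤ s)
    (hgrow : ∀ ρ ∈ Ioo (0 : ℝ) 1, ∀ γ, f x₀ ≤ f γ → f γ < s →
      ∀ᶠ ε in 𝓝[>] 0, ∃ γ', dist γ' γ = ε ∧ f γ + ρ * ε ≤ f γ') :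
    ∃ γ, s ≤ f γ ∧ dist γ x₀ ≤ s - f x₀ := by
  set K := {γ | s ≤ f γ} ∩ closedBall x₀ (2 * (s - f x₀))
  have hK : IsCompact K := (isCompact_closedBall _ _).inter_left (isClosed_le (by fun_prop) hf)
  have hmemK : ∀ ρ ∈ Ioo (1 / 2 : ℝ) 1, ∃ γ ∈ K, ρ * dist γ x₀ ≤ s - f x₀ := fun ρ hρ => by
    obtain ⟨γ, hγ, hγx⟩ := exists_le_and_mul_dist_le hf (by linarith [hρ.1]) hs
      (hgrow ρ ⟨by linarith [hρ.1], hρ.2⟩)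
    refine ⟨γ, ⟨hγ, mem_closedBall.2 ?_⟩, hγx⟩
    nlinarith [hρ.1, dist_nonneg (x := γ) (y := x₀)]
  obtain ⟨γ₀, hγ₀K, hmin⟩ := hK.exists_isMinOn
    (let ⟨γ, hγK, _⟩ := hmemK (3 / 4) (by norm_num); ⟨γ, hγK⟩)
    (f := fun γ => dist γ x₀) (by fun_prop)
  have h := mul_le_of_forall_mem_Ioo_mul_le (by norm_num : (1 / 2 : ℝ) < 1) fun ρ hρ => by
    obtain ⟨γ, hγK, hγx⟩ := hmemK ρ hρ
    exact (mul_le_mul_of_nonneg_left (isMinOn_iff.1 hmin γ hγK) (by linarith [hρ.1])).trans hγx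
  exact ⟨γ₀, hγ₀K.1, by simpa using h⟩

end Metric

section InnerProduct

variable {H : Type*} [NormedAddCommGroup H] [InnerProductSpace ℝ H]

-- The ball of radius `T` around `T • u` avoids `v`; if `v` is close to `0`, moving the centre
-- along `u` takes it away from `v` at speed at least `ρ`.
theorem add_mul_le_norm_add_smul_sub {u v : H} {T ε ρ : ℝ} (hu : ‖u‖ = 1) (hT : 0 < T)
    (hε : 0 ≤ ε) (hρ0 : 0 ≤ ρ) (hρ1 : ρ ≤ 1) (hfar : T ≤ ‖T • u - v‖)
    (hnear : ‖v‖ ^ 2 ≤ T ^ 2 * (1 - ρ)) :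
    T + ρ * ε ≤ ‖(T + ε) • u - v‖ := by
  have hsq : ∀ t : ℝ, ‖t • u - v‖ ^ 2 = t ^ 2 - 2 * t * ⟪u, v⟫ + ‖v‖ ^ 2 := fun t => by
    rw [norm_sub_sq_real, norm_smul, hu, real_inner_smul_left, Real.norm_eq_abs, mul_one, sq_abs]
    ring
  have hfar' : T ^ 2 ≤ ‖T • u - v‖ ^ 2 := pow_le_pow_left₀ hT.le hfar 2
  rw [hsq] at hfar'
  refine abs_le_of_sq_le_sq' ?_ (norm_nonneg _) |>.2
  rw [hsq]
  nlinarith [mul_nonneg hε (mul_nonneg hT.le (sub_nonneg.2 hρ1)),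
    mul_nonneg (mul_nonneg hε hε) (sub_nonneg.2 hρ1), mul_nonneg hε hρ0]

theorem two_mul_inner_le_of_norm_sub_le {a x γ b : H} {D s : ℝ} (hD : 0 < D)
    (hxa : ‖x - a‖ = D) (hγx : ‖γ - x‖ ≤ s - D) (hγa : s ≤ ‖γ - a‖) (hγb : s ≤ ‖γ - b‖) :
    2 * s * ⟪x - a, b - a⟫ ≤ D * ‖b - a‖ ^ 2 := by
  have hs : 0 < s := by linarith [norm_nonneg (γ - x)]
  have hγa' : ‖γ - a‖ = s := by
    refine le_antisymm ?_ hγa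
    calc ‖γ - a‖ = ‖(γ - x) + (x - a)‖ := by rw [sub_add_sub_cancel]
      _ ≤ ‖γ - x‖ + ‖x - a‖ := norm_add_le _ _
      _ ≤ s := by linarith
  -- equality in the triangle inequality forces `γ - a = (s / D) • (x - a)`
  have hinner : ⟪γ - a, x - a⟫ = ‖γ - a‖ * ‖x - a‖ := by
    refine le_antisymm (real_inner_le_norm _ _) ?_
    have h := pow_le_pow_left₀ (norm_nonneg _) hγx 2
    rw [← sub_sub_sub_cancel_right γ x a, norm_sub_sq_real, hγa', hxa] at h
    rw [hγa', hxa]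
    nlinarith
  have haligned : D • (γ - a) = s • (x - a) := by
    rw [← hxa, ← hγa']; exact inner_eq_norm_mul_iff_real.1 hinner
  have hfar : 2 * ⟪γ - a, b - a⟫ ≤ ‖b - a‖ ^ 2 := by
    have h := pow_le_pow_left₀ hs.le hγb 2
    rw [← sub_sub_sub_cancel_right γ b a, norm_sub_sq_real, hγa'] at h
    linarith
  calc 2 * s * ⟪x - a, b - a⟫ = D * (2 * ⟪γ - a, b - a⟫) := by
        rw [mul_assoc, ← real_inner_smul_left, ← haligned, real_inner_smul_left]; ring
    _ ≤ D * ‖b - a‖ ^ 2 := mul_le_mul_of_nonneg_left hfar hD.le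

theorem mul_norm_sub_le_of_two_mul_inner_le {x y p q : H} {r R : ℝ} (hR : 0 ≤ R)
    (hp : 2 * R * ⟪x - p, q - p⟫ ≤ r * ‖q - p‖ ^ 2)
    (hq : 2 * R * ⟪y - q, p - q⟫ ≤ r * ‖p - q‖ ^ 2) :
    (R - r) * ‖p - q‖ ≤ R * ‖x - y‖ := by
  have hsplit : ‖p - q‖ ^ 2 = ⟪x - p, q - p⟫ + ⟪x - y, p - q⟫ + ⟪y - q, p - q⟫ := by
    rw [← real_inner_self_eq_norm_sq, ← inner_neg_neg (x - p), neg_sub, neg_sub,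
      ← inner_add_left, ← inner_add_left]
    congr 1; abel
  have hcs := real_inner_le_norm (x - y) (p - q)
  rw [norm_sub_rev q p] at hp
  rcases (norm_nonneg (p - q)).eq_or_lt with hpq | hpq
  · rw [← hpq, mul_zero]; positivity
  refine le_of_mul_le_mul_right ?_ hpq
  nlinarith [mul_le_mul_of_nonneg_left hcs hR]

-- `UniqueNearestPointsWithin E R` is `R ≤ reach E`.
def UniqueNearestPointsWithin (E : Set H) (R : ℝ) : Prop :=
  ∀ x, infDist x E < R → ∃! y, y ∈ E ∧ dist x y = infDist x E

variable [ProperSpace H] {E : Set H}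

theorem eventually_exists_infDist_add_mul_le (hE : IsClosed E) (hne : E.Nonempty) {γ : H}
    (hγ : 0 < infDist γ E) (huniq : ∃! a, a ∈ E ∧ dist γ a = infDist γ E) {ρ : ℝ}
    (hρ0 : 0 ≤ ρ) (hρ1 : ρ < 1) :
    ∀ᶠ ε in 𝓝[>] 0, ∃ γ', dist γ' γ = ε ∧ infDist γ E + ρ * ε ≤ infDist γ' E := by
  obtain ⟨a, ⟨ha, hγa⟩, hunique⟩ := huniq
  set T := infDist γ E
  set u := T⁻¹ • (γ - a)
  have hu : ‖u‖ = 1 := by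
    rw [norm_smul, ← dist_eq_norm, hγa, norm_inv, Real.norm_of_nonneg hγ.le,
      inv_mul_cancel₀ hγ.ne']
  have hγu : γ = a + T • u := by simp [u, smul_smul, mul_inv_cancel₀ hγ.ne']
  obtain ⟨ε₁, hε₁, hnear⟩ := Metric.eventually_nhds_iff.1 <|
    eventually_nhds_forall_nearest_dist_lt hE (fun q hq hγq => hunique q ⟨hq, hγq⟩)
      (mul_pos hγ (Real.sqrt_pos.2 (sub_pos.2 hρ1)))
  filter_upwards [Ioo_mem_nhdsGT hε₁] with ε ⟨hε0, hε⟩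
  have hstep : dist (γ + ε • u) γ = ε := by
    rw [dist_eq_norm, add_sub_cancel_left, norm_smul, hu, mul_one, Real.norm_of_nonneg hε0.le]
  refine ⟨γ + ε • u, hstep, ?_⟩
  obtain ⟨q, hq, hγ'q⟩ := hE.exists_infDist_eq_dist hne (γ + ε • u)
  have hqa := hnear (hstep.trans_lt hε) q hq hγ'q.symm
  rw [hγ'q, dist_eq_norm, show γ + ε • u - q = (T + ε) • u - (q - a) by rw [hγu]; module]
  refine add_mul_le_norm_add_smul_sub hu hγ hε0.le hρ0 hρ1.le ?_ ?_
  · rw [← show γ - q = T • u - (q - a) by rw [hγu]; module, ← dist_eq_norm]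
    exact infDist_le_dist_of_mem hq
  · calc ‖q - a‖ ^ 2 ≤ (T * √(1 - ρ)) ^ 2 := by
          gcongr; rw [← dist_eq_norm]; exact hqa.le
      _ = T ^ 2 * (1 - ρ) := by rw [mul_pow, Real.sq_sqrt (sub_nonneg.2 hρ1.le)]

theorem exists_le_infDist_and_dist_le (hE : IsClosed E) (hne : E.Nonempty) {R : ℝ}
    (hreach : UniqueNearestPointsWithin E R) {x : H} (hx : 0 < infDist x E) {s : ℝ}
    (hxs : infDist x E ≤ s) (hsR : s < R) :
    ∃ γ, s ≤ infDist γ E ∧ dist γ x ≤ s - infDist x E :=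
  exists_le_and_dist_le (continuous_infDist_pt E) hxs fun _ hρ γ hxγ hγs =>
    eventually_exists_infDist_add_mul_le hE hne (hx.trans_le hxγ) (hreach γ (hγs.trans hsR))
      hρ.1.le hρ.2

theorem two_mul_inner_le_of_uniqueNearestPointsWithin (hE : IsClosed E) (hne : E.Nonempty)
    {R : ℝ} (hreach : UniqueNearestPointsWithin E R) {x a b : H} (ha : a ∈ E)
    (hxa : dist x a = infDist x E) (hxR : infDist x E < R) (hb : b ∈ E) :
    2 * R * ⟪x - a, b - a⟫ ≤ infDist x E * ‖b - a‖ ^ 2 := by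
  rcases (infDist_nonneg (x := x) (s := E)).eq_or_lt with hx | hx
  · rw [dist_eq_zero.1 (hxa.trans hx.symm), sub_self, inner_zero_left, mul_zero]
    exact mul_nonneg infDist_nonneg (sq_nonneg _)
  rw [mul_comm 2 R, mul_assoc]
  refine mul_le_of_forall_mem_Ioo_mul_le hxR fun s hs => ?_
  obtain ⟨γ, hγ, hγx⟩ := exists_le_infDist_and_dist_le hE hne hreach hx hs.1.le hs.2
  rw [dist_eq_norm] at hxa hγx
  have hfar : ∀ c ∈ E, s ≤ ‖γ - c‖ := fun c hc =>
    hγ.trans (dist_eq_norm γ c ▸ infDist_le_dist_of_mem hc)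
  have := two_mul_inner_le_of_norm_sub_le hx hxa hγx (hfar a ha) (hfar b hb)
  linarith

end InnerProduct

theorem stmt_11_general (n : ℕ) (E : Set (EuclideanSpace ℝ (Fin n)))
    (hcl : IsClosed E) (hne : E.Nonempty) (R : ℝ)
    (hreach : ∀ x : EuclideanSpace ℝ (Fin n), Metric.infDist x E < R →
      ∃! y, y ∈ E ∧ dist x y = Metric.infDist x E)
    (r : ℝ) (hrR : r < R) :
    (∀ x : EuclideanSpace ℝ (Fin n), Metric.infDist x E ≤ r →
      ∃! y, y ∈ E ∧ dist x y = Metric.infDist x E) ∧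
    ∃ π : EuclideanSpace ℝ (Fin n) → EuclideanSpace ℝ (Fin n),
      (∀ x, Metric.infDist x E ≤ r → π x ∈ E ∧ dist x (π x) = Metric.infDist x E) ∧
      LipschitzOnWith (Real.toNNReal (R / (R - r))) π
        {x : EuclideanSpace ℝ (Fin n) | Metric.infDist x E ≤ r} := by
  choose π hπE hπ using hcl.exists_infDist_eq_dist hne
  refine ⟨fun x hx => hreach x (hx.trans_lt hrR), π, fun x _ => ⟨hπE x, (hπ x).symm⟩,
    LipschitzOnWith.of_dist_le' fun x hx y hy => ?_⟩
  have key : ∀ {x y}, infDist x E ≤ r →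
      2 * R * ⟪x - π x, π y - π x⟫ ≤ r * ‖π y - π x‖ ^ 2 := fun hx =>
    (two_mul_inner_le_of_uniqueNearestPointsWithin hcl hne hreach (hπE _) (hπ _).symm
      (hx.trans_lt hrR) (hπE _)).trans (by gcongr)
  have := mul_norm_sub_le_of_two_mul_inner_le ((infDist_nonneg.trans hx).trans hrR.le)
    (key hx) (key hy)
  rw [dist_eq_norm, dist_eq_norm, div_mul_eq_mul_div, le_div_iff₀ (sub_pos.2 hrR)]
  linarith

theorem stmt_11 (n : ℕ) (E : Set (EuclideanSpace ℝ (Fin n)))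
    (hcl : IsClosed E) (hne : E.Nonempty) (R : ℝ) (hR : 0 < R)
    (hreach : ∀ x : EuclideanSpace ℝ (Fin n), Metric.infDist x E < R →
      ∃! y, y ∈ E ∧ dist x y = Metric.infDist x E)
    (r : ℝ) (hr0 : 0 < r) (hrR : r < R) :
    (∀ x : EuclideanSpace ℝ (Fin n), Metric.infDist x E ≤ r →
      ∃! y, y ∈ E ∧ dist x y = Metric.infDist x E) ∧
    ∃ π : EuclideanSpace ℝ (Fin n) → EuclideanSpace ℝ (Fin n),
      (∀ x, Metric.infDist x E ≤ r → π x ∈ E ∧ dist x (π x) = Metric.infDist x E) ∧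
      LipschitzOnWith (Real.toNNReal (R / (R - r))) π
        {x : EuclideanSpace ℝ (Fin n) | Metric.infDist x E ≤ r} :=
  stmt_11_general n E hcl hne R hreach r hrR
end

section
/- Let Γ ⊂ ℝ^n be compact and connected with H¹(Γ) < ∞. Then Γ is path-connected and in fact is the image of a Lipschitz map from a compact interval into ℝ^n; in particular Γ is (H¹,1)-rectifiable. -/
/-!
Fix `a ≠ b` in `Γ` and `0 < r ≤ dist a b / 2`, so that every `p ∈ Γ` has a point of `Γ` at
distance `≥ r`. As `Γ` is connected, the `1`-Lipschitz map `z ↦ dist z p` then sends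
`Γ ∩ closedBall p r` onto `[0, r]`, so this piece of `Γ` has `H¹`-measure at least `r`. Hence a
maximal `2r`-separated set `N ⊆ Γ`, which is a `2r`-net, has `#N * r ≤ H¹(Γ)`. Connectedness of
`Γ` makes the graph on `N` joining points at distance `≤ 6r` connected, so a depth-first walk
visits all of `N` in fewer than `2 #N` steps. Running through the walk in unit time and extending
to `ℝ` gives maps whose Lipschitz constants are `O(H¹(Γ))` independently of `r`, and whose images
of `[0, 1]` are `O(r)`-close to `Γ`. A pointwise limit along an ultrafilter is then Lipschitz
and maps `[0, 1]` onto `Γ`.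
-/

open MeasureTheory Metric Set Filter
open scoped ENNReal NNReal Topology

theorem Relation.ReflTransGen.exists_rel_mem_notMem {α : Type*} {r : α → α → Prop} {S : Set α}
    {x y : α} (h : Relation.ReflTransGen r x y) (hx : x ∈ S) (hy : y ∉ S) :
    ∃ u ∈ S, ∃ v ∉ S, r u v := by
  induction h with
  | refl => exact absurd hx hy
  | @tail b c _ hbc ih =>
    by_cases hb : b ∈ S
    · exact ⟨b, hb, c, hy, hbc⟩
    · exact ih hb

theorem List.IsChain.exists_insert_pair {α : Type*} {r : α → α → Prop} {l : List α}
    (hl : l.IsChain r) {u v : α} (hu : u ∈ l) (huv : r u v) (hvu : r v u) :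
    ∃ l' : List α, l'.IsChain r ∧ l'.length = l.length + 2 ∧ ∀ y, y ∈ l' ↔ y = v ∨ y ∈ l := by
  obtain ⟨s, t, rfl⟩ := List.append_of_mem hu
  refine ⟨s ++ u :: v :: u :: t, ?_, ?_, fun y ↦ ?_⟩
  · rw [List.isChain_append] at hl ⊢
    exact ⟨hl.1, by simpa [huv, hvu] using hl.2.1, by simpa using hl.2.2⟩
  · simp only [List.length_append, List.length_cons]
    omega
  · simp only [List.mem_append, List.mem_cons]
    tauto

theorem Finset.exists_covering_isChain {α : Type*} {r : α → α → Prop} [Std.Symm r]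
    {s : Finset α} {x : α} (hx : x ∈ s)
    (hconn : ∀ y ∈ s, Relation.ReflTransGen (fun u v ↦ u ∈ s ∧ v ∈ s ∧ r u v) x y) :
    ∃ l : List α, l.IsChain r ∧ (∀ y, y ∈ l ↔ y ∈ s) ∧ l.length < 2 * s.card := by
  classical
  suffices ∀ k (l : List α), l.IsChain r → x ∈ l → (∀ y ∈ l, y ∈ s) →
      (s \ l.toFinset).card = k →
      ∃ l' : List α, l'.IsChain r ∧ (∀ y, y ∈ l' ↔ y ∈ s) ∧ l'.length ≤ l.length + 2 * k by
    obtain ⟨l, hchain, hmem, hlen⟩ := this _ [x] (List.isChain_singleton x) (by simp)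
      (by simpa using hx) rfl
    have : (s \ {x}).card + 1 = s.card := by
      rw [Finset.sdiff_singleton_eq_erase, Finset.card_erase_add_one hx]
    simp only [List.length_singleton, List.toFinset_cons, List.toFinset_nil,
      insert_empty_eq] at hlen
    exact ⟨l, hchain, hmem, by omega⟩
  intro k
  induction k with
  | zero =>
    intro l hchain hxl hls hk
    refine ⟨l, hchain, fun y ↦ ⟨hls y, fun hy ↦ ?_⟩, by simp⟩
    simpa using Finset.sdiff_eq_empty_iff_subset.1 (Finset.card_eq_zero.1 hk) hy
  | succ k ih =>
    intro l hchain hxl hls hk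
    obtain ⟨w, hw⟩ := Finset.card_pos.1 (by rw [hk]; exact k.succ_pos)
    obtain ⟨hws, hwl⟩ := Finset.mem_sdiff.1 hw
    obtain ⟨u, hul, v, hvl, -, hvs, huv⟩ :=
      (hconn w hws).exists_rel_mem_notMem (S := {y | y ∈ l}) hxl (mt List.mem_toFinset.2 hwl)
    obtain ⟨l', hchain', hlen', hmem'⟩ :=
      hchain.exists_insert_pair hul huv (Std.Symm.symm _ _ huv)
    have hsdiff : s \ l'.toFinset = (s \ l.toFinset).erase v := by
      ext y
      simp only [Finset.mem_sdiff, Finset.mem_erase, List.mem_toFinset, hmem']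
      tauto
    obtain ⟨l'', h1, h2, h3⟩ := ih l' hchain' ((hmem' x).2 (.inr hxl))
      (fun y hy ↦ ((hmem' y).1 hy).elim (· ▸ hvs) (hls y))
      (by rw [hsdiff, Finset.card_erase_of_mem (by simpa [hvs] using hvl), hk]; rfl)
    exact ⟨l'', h1, h2, by omega⟩

theorem Finset.exists_covering_walk {α : Type*} {r : α → α → Prop} [Std.Symm r]
    {s : Finset α} {x : α} (hx : x ∈ s)
    (hconn : ∀ y ∈ s, Relation.ReflTransGen (fun u v ↦ u ∈ s ∧ v ∈ s ∧ r u v) x y) :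
    ∃ m < 2 * s.card, ∃ a : ℕ → α, (∀ i < m, r (a i) (a (i + 1))) ∧ (∀ i ≤ m, a i ∈ s) ∧
      ∀ y ∈ s, ∃ i ≤ m, a i = y := by
  obtain ⟨l, hchain, hmem, hlen⟩ := exists_covering_isChain hx hconn
  have hl : 0 < l.length := List.length_pos_of_mem ((hmem x).2 hx)
  refine ⟨l.length - 1, by omega, (l.getD · x), fun i hi ↦ ?_, fun i hi ↦ ?_, fun y hy ↦ ?_⟩
  · beta_reduce
    rw [List.getD_eq_getElem _ _ (by omega), List.getD_eq_getElem _ _ (by omega)]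
    exact List.isChain_iff_getElem.1 hchain i (by omega)
  · beta_reduce
    rw [List.getD_eq_getElem _ _ (by omega)]
    exact (hmem _).1 (List.getElem_mem _)
  · obtain ⟨i, hi, rfl⟩ := List.mem_iff_getElem.1 ((hmem y).2 hy)
    exact ⟨i, by omega, List.getD_eq_getElem _ _ hi⟩

theorem IsPreconnected.reflTransGen_dist_le_three_mul {X : Type*} [PseudoMetricSpace X]
    {Γ N : Set X} (hΓ : IsPreconnected Γ) (hNΓ : N ⊆ Γ) {ε : ℝ} (hε : 0 < ε)
    (hN : ∀ x ∈ Γ, ∃ p ∈ N, dist x p ≤ ε) {p q : X} (hp : p ∈ N) (hq : q ∈ N) :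
    Relation.ReflTransGen (fun u v ↦ u ∈ N ∧ v ∈ N ∧ dist u v ≤ 3 * ε) p q := by
  set adj := fun u v : X ↦ u ∈ N ∧ v ∈ N ∧ dist u v ≤ 3 * ε
  have : Std.Symm adj := ⟨fun u v ⟨hu, hv, h⟩ ↦ ⟨hv, hu, dist_comm u v ▸ h⟩⟩
  let P : X → X → Prop := fun x y ↦
    ∀ p ∈ N, dist x p ≤ ε → ∀ q ∈ N, dist y q ≤ ε → Relation.ReflTransGen adj p q
  suffices P p q from this p hp (by simpa using hε.le) q hq (by simpa using hε.le)
  refine hΓ.induction₂ P (fun x _ ↦ ?_) (fun x y z _ hy _ hxy hyz p hp hxp q hq hzq ↦ ?_)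
    (fun x y _ _ hxy p hp hyp q hq hxq ↦ Std.Symm.symm _ _ (hxy q hq hxq p hp hyp))
    (hNΓ hp) (hNΓ hq)
  · filter_upwards [mem_nhdsWithin_of_mem_nhds (ball_mem_nhds x hε)] with y hy
    intro p hp hxp q hq hyq
    refine .single ⟨hp, hq, ?_⟩
    linarith [dist_triangle4 p x y q, dist_comm x p, mem_ball'.1 hy]
  · obtain ⟨s, hs, hys⟩ := hN y hy
    exact (hxy p hp hxp s hs hys).trans (hyz s hs hys q hq hzq)

section Hausdorff

variable {X : Type*} [MetricSpace X] [MeasurableSpace X] [BorelSpace X] {Γ : Set X}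

theorem IsPreconnected.coe_le_hausdorffMeasure_inter_closedBall (hΓ : IsPreconnected Γ)
    {x y : X} (hx : x ∈ Γ) (hy : y ∈ Γ) {r : ℝ≥0} (hr : (r : ℝ) ≤ dist x y) :
    (r : ℝ≥0∞) ≤ μH[1] (Γ ∩ closedBall x r) := by
  have hd : LipschitzWith 1 (dist · x) := LipschitzWith.dist_left x
  have hIcc : Icc 0 (r : ℝ) ⊆ (dist · x) '' (Γ ∩ closedBall x r) := by
    intro s hs
    obtain ⟨z, hz, rfl⟩ := (hΓ.image _ hd.continuous.continuousOn).Icc_subset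
      (mem_image_of_mem _ hx) (mem_image_of_mem _ hy)
      ⟨(dist_self x).trans_le hs.1, hs.2.trans (hr.trans_eq (dist_comm x y))⟩
    exact ⟨z, ⟨hz, hs.2⟩, rfl⟩
  calc (r : ℝ≥0∞) = μH[1] (Icc 0 (r : ℝ)) := by simp [hausdorffMeasure_real]
    _ ≤ μH[1] ((dist · x) '' (Γ ∩ closedBall x r)) := measure_mono hIcc
    _ ≤ μH[1] (Γ ∩ closedBall x r) := by
      simpa using hd.hausdorffMeasure_image_le zero_le_one (Γ ∩ closedBall x r)

theorem IsPreconnected.card_mul_le_hausdorffMeasure (hΓ : IsPreconnected Γ) (hΓc : IsClosed Γ)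
    {r : ℝ≥0} (hfar : ∀ x ∈ Γ, ∃ y ∈ Γ, (r : ℝ) ≤ dist x y) {F : Finset X} (hFΓ : ↑F ⊆ Γ)
    (hF : IsSeparated (2 * r : ℝ≥0) (F : Set X)) :
    F.card * (r : ℝ≥0∞) ≤ μH[1] Γ := by
  have hdisj : (F : Set X).PairwiseDisjoint (fun a ↦ Γ ∩ closedBall a r) := by
    intro a ha b hb hab
    have hsep : ((2 * r : ℝ≥0) : ℝ) < dist a b := by
      have : ((2 * r : ℝ≥0) : ℝ≥0∞) < edist a b := hF ha hb hab
      rwa [edist_nndist, ENNReal.coe_lt_coe, ← NNReal.coe_lt_coe, coe_nndist] at this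
    refine (closedBall_disjoint_closedBall ?_).mono inter_subset_right inter_subset_right
    push_cast at hsep
    linarith
  calc F.card * (r : ℝ≥0∞) = ∑ _ ∈ F, (r : ℝ≥0∞) := by simp
    _ ≤ ∑ a ∈ F, μH[1] (Γ ∩ closedBall a r) := by
      refine Finset.sum_le_sum fun a ha ↦ ?_
      obtain ⟨y, hy, hay⟩ := hfar a (hFΓ ha)
      exact hΓ.coe_le_hausdorffMeasure_inter_closedBall (hFΓ ha) hy hay
    _ = μH[1] (⋃ a ∈ F, Γ ∩ closedBall a r) := (measure_biUnion_finset hdisj fun _ _ ↦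
      hΓc.measurableSet.inter measurableSet_closedBall).symm
    _ ≤ μH[1] Γ := measure_mono (iUnion₂_subset fun _ _ ↦ inter_subset_left)

theorem IsCompact.exists_finset_net_card_mul_le_hausdorffMeasure (hcomp : IsCompact Γ)
    (hconn : IsPreconnected Γ) {r : ℝ≥0} (hr : r ≠ 0)
    (hfar : ∀ x ∈ Γ, ∃ y ∈ Γ, (r : ℝ) ≤ dist x y) :
    ∃ N : Finset X, ↑N ⊆ Γ ∧ (∀ x ∈ Γ, ∃ p ∈ N, dist x p ≤ 2 * r) ∧
      N.card * (r : ℝ≥0∞) ≤ μH[1] Γ := by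
  have hpack : packingNumber (2 * r) Γ ≠ ⊤ := by
    obtain ⟨C, -, hC, hcover⟩ := exists_finite_isCover_of_totallyBounded hr hcomp.totallyBounded
    exact ne_top_of_le_ne_top hC.encard_lt_top.ne
      ((packingNumber_two_mul_le_externalCoveringNumber r Γ).trans
        hcover.externalCoveringNumber_le_encard)
  have hfin : (maximalSeparatedSet (2 * r) Γ).Finite := by
    rw [← encard_ne_top_iff, encard_maximalSeparatedSet hpack]
    exact hpack
  have hsub : ↑hfin.toFinset ⊆ Γ := by
    rw [hfin.coe_toFinset]
    exact maximalSeparatedSet_subset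
  refine ⟨hfin.toFinset, hsub, fun x hx ↦ ?_,
    hconn.card_mul_le_hausdorffMeasure hcomp.isClosed hfar hsub ?_⟩
  · obtain ⟨p, hp, hxp⟩ := isCover_maximalSeparatedSet hpack hx
    exact ⟨p, hfin.mem_toFinset.2 hp, by simpa [← NNReal.coe_le_coe] using edist_le_coe.1 hxp⟩
  · rw [hfin.coe_toFinset]
    exact isSeparated_maximalSeparatedSet

end Hausdorff

section Interpolation

variable {E : Type*} [NormedAddCommGroup E] [NormedSpace ℝ E] [FiniteDimensional ℝ E]

theorem exists_lipschitzWith_natCast_eq (a : ℕ → E) (m : ℕ) {c : ℝ≥0}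
    (ha : ∀ i < m, dist (a i) (a (i + 1)) ≤ c) :
    ∃ G : ℝ → E, LipschitzWith (lipschitzExtensionConstant E * c) G ∧ ∀ i ≤ m, G i = a i := by
  have hdist : ∀ i ≤ m, ∀ j ≤ m, dist (a i) (a j) ≤ c * dist (i : ℝ) j := by
    intro i hi j hj
    wlog hij : i ≤ j generalizing i j
    · rw [dist_comm, dist_comm (i : ℝ)]
      exact this j hj i hi (by omega)
    calc dist (a i) (a j) ≤ ∑ _ ∈ Finset.Ico i j, (c : ℝ) :=
          dist_le_Ico_sum_of_dist_le hij fun _ hk ↦ ha _ (by omega)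
      _ = c * dist (i : ℝ) j := by
          rw [Finset.sum_const, Nat.card_Ico, nsmul_eq_mul, mul_comm, Nat.cast_sub hij,
            Real.dist_eq, abs_sub_comm, abs_of_nonneg (by simpa using hij)]
  have hF : LipschitzOnWith c (fun t : ℝ ↦ a ⌊t⌋₊) ((↑) '' Iic m) := by
    refine LipschitzOnWith.of_dist_le_mul ?_
    rintro _ ⟨i, hi, rfl⟩ _ ⟨j, hj, rfl⟩
    simpa using hdist i hi j hj
  obtain ⟨G, hG, hGF⟩ := hF.extend_finite_dimension
  exact ⟨G, hG, fun i hi ↦ by simpa using (hGF ⟨i, hi, rfl⟩).symm⟩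

theorem exists_lipschitzWith_interpolating_Icc (a : ℕ → E) (m : ℕ) {c : ℝ≥0}
    (ha : ∀ i < m, dist (a i) (a (i + 1)) ≤ c) :
    ∃ g : ℝ → E, LipschitzWith (lipschitzExtensionConstant E * c * m) g ∧
      (∀ t, ∃ i ≤ m, dist (g t) (a i) ≤ lipschitzExtensionConstant E * c) ∧
      ∀ i ≤ m, ∃ t ∈ Icc (0 : ℝ) 1, g t = a i := by
  obtain ⟨G, hG, hGa⟩ := exists_lipschitzWith_natCast_eq a m ha
  set τ : ℝ → ℝ := fun t ↦ m * (projIcc 0 1 zero_le_one t : ℝ)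
  have hτ : LipschitzWith m τ := by
    have := (lipschitzWith_smul (m : ℝ)).comp
      ((LipschitzWith.subtype_val _).comp (LipschitzWith.projIcc zero_le_one))
    rwa [mul_one, mul_one, Real.nnnorm_natCast] at this
  have hτm : ∀ t, τ t ∈ Icc (0 : ℝ) m := fun t ↦
    ⟨mul_nonneg m.cast_nonneg (projIcc 0 1 zero_le_one t).2.1,
      mul_le_of_le_one_right m.cast_nonneg (projIcc 0 1 zero_le_one t).2.2⟩
  refine ⟨G ∘ τ, hG.comp hτ, fun t ↦ ?_, fun i hi ↦ ?_⟩
  · have hfloor : ⌊τ t⌋₊ ≤ m := Nat.floor_le_of_le (hτm t).2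
    have h0 := Nat.floor_le (hτm t).1
    have h1 := Nat.lt_floor_add_one (τ t)
    refine ⟨⌊τ t⌋₊, hfloor, ?_⟩
    calc dist (G (τ t)) (a ⌊τ t⌋₊) = dist (G (τ t)) (G ⌊τ t⌋₊) := by rw [hGa _ hfloor]
      _ ≤ lipschitzExtensionConstant E * c * dist (τ t) ⌊τ t⌋₊ := hG.dist_le_mul _ _
      _ ≤ lipschitzExtensionConstant E * c * 1 := by
          gcongr
          rw [Real.dist_eq, abs_of_nonneg (by linarith)]
          linarith
      _ = lipschitzExtensionConstant E * c := mul_one _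
  · have hi' : (i : ℝ) / m ∈ Icc (0 : ℝ) 1 :=
      ⟨by positivity, div_le_one_of_le₀ (by exact_mod_cast hi) m.cast_nonneg⟩
    refine ⟨i / m, hi', ?_⟩
    rcases eq_or_ne m 0 with rfl | hm
    · obtain rfl : i = 0 := by omega
      simpa [τ] using hGa 0 le_rfl
    · have : τ (i / m) = i := by
        simp [τ, projIcc_of_mem _ hi', mul_div_cancel₀ _ (Nat.cast_ne_zero.2 hm : (m : ℝ) ≠ 0)]
      simp [this, hGa i hi]

end Interpolation

theorem IsCompact.exists_lipschitzWith_image_Icc_eq_of_approx {X : Type*} [MetricSpace X]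
    [ProperSpace X] {Γ : Set X} (hΓ : IsCompact Γ) {K : ℝ≥0}
    (happrox : ∀ ε > 0, ∃ g : ℝ → X, LipschitzWith K g ∧ (∀ t, ∃ y ∈ Γ, dist (g t) y ≤ ε) ∧
      ∀ x ∈ Γ, ∃ t ∈ Icc (0 : ℝ) 1, dist x (g t) ≤ ε) :
    ∃ f : ℝ → X, LipschitzWith K f ∧ f '' Icc 0 1 = Γ := by
  choose g hgK hgΓ hΓg using fun k : ℕ ↦ happrox (1 / (k + 1)) Nat.one_div_pos_of_nat
  set U : Ultrafilter ℕ := .of atTop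
  have hU : Tendsto (fun k : ℕ ↦ 1 / ((k : ℝ) + 1)) U (𝓝 0) :=
    tendsto_one_div_add_atTop_nhds_zero_nat.mono_left (Ultrafilter.of_le _)
  have hlim : ∀ t, ∃ z, Tendsto (fun k ↦ g k t) U (𝓝 z) := fun t ↦ by
    have hmem : ∀ k, g k t ∈ cthickening 1 Γ := fun k ↦ by
      obtain ⟨y, hy, hdy⟩ := hgΓ k t
      refine mem_cthickening_of_dist_le _ y _ _ hy (hdy.trans ?_)
      rw [div_le_one (by positivity)]
      simp
    obtain ⟨z, -, hz⟩ := hΓ.cthickening.ultrafilter_le_nhds (U.map fun k ↦ g k t)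
      (le_principal_iff.2 (mem_map.2 (univ_mem' hmem)))
    exact ⟨z, hz⟩
  choose f hf using hlim
  have hfK : LipschitzWith K f := LipschitzWith.of_dist_le_mul fun s t ↦
    le_of_tendsto ((hf s).dist (hf t)) (.of_forall fun k ↦ (hgK k).dist_le_mul s t)
  refine ⟨f, hfK, subset_antisymm ?_ fun x hx ↦ ?_⟩
  · rintro _ ⟨t, -, rfl⟩
    choose y hyΓ hy using fun k ↦ hgΓ k t
    refine hΓ.isClosed.mem_of_tendsto ((hf t).congr_dist ?_) (.of_forall hyΓ)
    exact squeeze_zero (fun _ ↦ dist_nonneg) hy hU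
  · choose s hs hxs using fun k ↦ hΓg k x hx
    obtain ⟨t, ht, hst⟩ := isCompact_Icc.ultrafilter_le_nhds (U.map s)
      (le_principal_iff.2 (mem_map.2 (univ_mem' hs)))
    refine ⟨t, ht, tendsto_nhds_unique ((hf t).congr_dist ?_) (tendsto_const_nhds (x := x))⟩
    have hbound : ∀ k, dist (g k t) x ≤ K * dist t (s k) + 1 / ((k : ℝ) + 1) := fun k ↦ by
      linarith [dist_triangle (g k t) (g k (s k)) x, (hgK k).dist_le_mul t (s k),
        dist_comm x (g k (s k)), hxs k]
    have hlim : Tendsto (fun k ↦ K * dist t (s k) + 1 / ((k : ℝ) + 1)) U (𝓝 0) := by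
      simpa using ((tendsto_const_nhds (x := t)).dist hst |>.const_mul (K : ℝ)).add hU
    exact squeeze_zero (fun _ ↦ dist_nonneg) hbound hlim

theorem IsCompact.exists_lipschitzWith_approx_of_hausdorffMeasure_lt_top {E : Type*}
    [NormedAddCommGroup E] [NormedSpace ℝ E] [FiniteDimensional ℝ E] [MeasurableSpace E]
    [BorelSpace E] {Γ : Set E} (hcomp : IsCompact Γ) (hconn : IsPreconnected Γ)
    (hlen : μH[1] Γ < ⊤) {a b : E} (ha : a ∈ Γ) (hb : b ∈ Γ) (hab : a ≠ b) :
    ∃ K : ℝ≥0, ∀ ε > 0, ∃ g : ℝ → E, LipschitzWith K g ∧ (∀ t, ∃ y ∈ Γ, dist (g t) y ≤ ε) ∧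
      ∀ x ∈ Γ, ∃ t ∈ Icc (0 : ℝ) 1, dist x (g t) ≤ ε := by
  set C := lipschitzExtensionConstant E
  -- the walk below has `m < 2 #N` steps of length `≤ 6 r`, and `#N * r ≤ H¹(Γ)`
  refine ⟨C * 12 * (μH[1] Γ).toNNReal, fun ε hε ↦ ?_⟩
  set r : ℝ≥0 := min (nndist a b / 2) (ε.toNNReal / (6 * C + 2))
  have hr : 0 < r := lt_min (half_pos (NNReal.coe_pos.1 (dist_pos.2 hab))) (by simpa using hε)
  have hrε : (6 * C + 2) * (r : ℝ) ≤ ε := by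
    have := NNReal.coe_le_coe.2 ((le_div_iff₀' (by positivity)).1 (min_le_right _ _) :
      (6 * C + 2) * r ≤ ε.toNNReal)
    simpa [Real.coe_toNNReal _ hε.le] using this
  have hfar : ∀ x ∈ Γ, ∃ y ∈ Γ, (r : ℝ) ≤ dist x y := by
    have hrab : (r : ℝ) ≤ dist a b / 2 := calc
      (r : ℝ) ≤ (nndist a b / 2 : ℝ≥0) := NNReal.coe_le_coe.2 (min_le_left _ _)
      _ = dist a b / 2 := by simp
    intro x _
    by_cases hxa : dist a b / 2 ≤ dist x a
    · exact ⟨a, ha, hrab.trans hxa⟩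
    · exact ⟨b, hb, by linarith [dist_triangle_left a b x]⟩
  obtain ⟨N, hNΓ, hNnet, hNcard⟩ :=
    hcomp.exists_finset_net_card_mul_le_hausdorffMeasure hconn hr.ne' hfar
  obtain ⟨p, hp, -⟩ := hNnet a ha
  have : Std.Symm (fun u v : E ↦ dist u v ≤ 3 * (2 * r)) := ⟨fun u v h ↦ dist_comm u v ▸ h⟩
  obtain ⟨m, hm, w, hstep, hwN, hNw⟩ := N.exists_covering_walk hp fun q hq ↦
    hconn.reflTransGen_dist_le_three_mul hNΓ (by positivity) hNnet hp hq
  obtain ⟨g, hg, hgw, hwg⟩ :=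
    exists_lipschitzWith_interpolating_Icc w m (c := 3 * (2 * r)) (by simpa using hstep)
  refine ⟨g, hg.weaken ?_, fun t ↦ ?_, fun x hx ↦ ?_⟩
  · have hcard : (N.card : ℝ≥0) * r ≤ (μH[1] Γ).toNNReal := by
      simpa using ENNReal.toNNReal_mono hlen.ne hNcard
    calc C * (3 * (2 * r)) * m ≤ C * (3 * (2 * r)) * (2 * N.card) := by
          gcongr
          exact_mod_cast hm.le
      _ = C * 12 * (N.card * r) := by ring
      _ ≤ C * 12 * (μH[1] Γ).toNNReal := by gcongr
  · obtain ⟨i, hi, hd⟩ := hgw t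
    refine ⟨w i, hNΓ (hwN i hi), hd.trans ?_⟩
    push_cast
    nlinarith [C.coe_nonneg, r.coe_nonneg]
  · obtain ⟨q, hq, hxq⟩ := hNnet x hx
    obtain ⟨i, hi, rfl⟩ := hNw q hq
    obtain ⟨t, ht, hgt⟩ := hwg i hi
    exact ⟨t, ht, hgt ▸ hxq.trans (by nlinarith [C.coe_nonneg, r.coe_nonneg])⟩

theorem stmt_18 (n : ℕ) (Γ : Set (EuclideanSpace ℝ (Fin n)))
    (hcomp : IsCompact Γ) (hconn : IsConnected Γ) (hlen : μH[1] Γ < ⊤) :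
    IsPathConnected Γ ∧
    ∃ (f : ℝ → EuclideanSpace ℝ (Fin n)) (K : NNReal),
      LipschitzWith K f ∧ f '' Set.Icc 0 1 = Γ := by
  suffices ∃ (f : ℝ → EuclideanSpace ℝ (Fin n)) (K : NNReal),
      LipschitzWith K f ∧ f '' Set.Icc 0 1 = Γ by
    obtain ⟨f, K, hf, hfΓ⟩ := this
    refine ⟨hfΓ ▸ ?_, f, K, hf, hfΓ⟩
    exact ((convex_Icc 0 1).isPathConnected (nonempty_Icc.2 zero_le_one)).image hf.continuous
  rcases Γ.subsingleton_or_nontrivial with hsub | ⟨a, ha, b, hb, hab⟩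
  · obtain ⟨x, hx⟩ := hconn.nonempty
    refine ⟨fun _ ↦ x, 0, LipschitzWith.const x, ?_⟩
    rw [hsub.eq_singleton_of_mem hx]
    exact (nonempty_Icc.2 zero_le_one).image_const x
  · obtain ⟨K, happrox⟩ := hcomp.exists_lipschitzWith_approx_of_hausdorffMeasure_lt_top
      hconn.isPreconnected hlen ha hb hab
    obtain ⟨f, hf, hfΓ⟩ := hcomp.exists_lipschitzWith_image_Icc_eq_of_approx happrox
    exact ⟨f, K, hf, hfΓ⟩
end
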